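/- arXiv:0706.1011 — 2 statements merged into one kernel-verified Lean document; each statement's English description precedes it below -/
import Mathlib

section
/- Let φ be the operator of left wedge multiplication by a fixed even-degree form ω on the complexified exterior algebra of an oriented odd-dimensional real inner product space, and let φ^⋆ be its super-adjoint with respect to the induced Hermitean inner product. Then φ^⋆ = * ∘ φ ∘ *, where * is the Hodge star. -/
/-!
Write `e s` for the basis monomials and `[x]_s` for the coefficient of `e s` in `x`. The
characterisation of the Hodge star `⋆` forces `⋆ e t = ε t • e tᶜ`, where
`e t ∧ e tᶜ = ε t • e univ` with `ε t = ±1`; in odd dimension graded commutativity gives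
`ε tᶜ = ε t`, so `⋆⋆ = 1`. Reading off the coefficient of the volume form gives the pairings
`[x ∧ ⋆ e t]_univ = [x]_t` and `[e s ∧ ⋆ y]_univ = [y]_s`. Since `ω` is even it is central, so
`[⋆ (ω ∧ ⋆ e t)]_s = [e s ∧ ω ∧ ⋆ e t]_univ = [ω ∧ e s ∧ ⋆ e t]_univ = [ω ∧ e s]_t`.
For real `ω` this coefficient is real, and for the inner product in which the `e s` are
orthonormal this says `(ω ∧ e s, e t) = (e s, ⋆ (ω ∧ ⋆ e t))`.
-/

open ExteriorAlgebra

/-- Basis monomial of the complexified exterior algebra. -/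
noncomputable def cMonomial {n : ℕ} {V : Type*} [AddCommGroup V] [Module ℂ V]
    (b : Module.Basis (Fin n) ℂ V) (s : Finset (Fin n)) : ExteriorAlgebra ℂ V :=
  ((s.sort (· ≤ ·)).map fun i => ι ℂ (b i)).prod

namespace ExteriorAlgebra

variable {R M I : Type*} [CommRing R] [AddCommGroup M] [Module R M]

lemma ι_mul_eq_neg_one_pow_smul {k : ℕ} {x : ExteriorAlgebra R M} (hx : x ∈ ⋀[R]^k M)
    (v : M) : ι R v * x = (-1 : R) ^ k • (x * ι R v) := by
  induction hx using Submodule.pow_induction_on_left' with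
  | algebraMap r => rw [pow_zero, one_smul, Algebra.commutes]
  | add x y i _ _ hx hy => rw [mul_add, hx, hy, add_mul, smul_add]
  | mem_mul m hm i x _ ih =>
    obtain ⟨w, rfl⟩ := hm
    have hvw : ι R v * ι R w = -(ι R w * ι R v) :=
      eq_neg_of_add_eq_zero_left (ι_add_mul_swap v w)
    rw [← mul_assoc, hvw, neg_mul, mul_assoc, ih, mul_smul_comm, ← mul_assoc, pow_succ,
      mul_neg_one, neg_smul, ← smul_neg]

lemma mul_eq_neg_one_pow_smul_mul {k m : ℕ} {x y : ExteriorAlgebra R M} (hx : x ∈ ⋀[R]^k M)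
    (hy : y ∈ ⋀[R]^m M) : x * y = (-1 : R) ^ (k * m) • (y * x) := by
  induction hx using Submodule.pow_induction_on_left' with
  | algebraMap r => rw [zero_mul, pow_zero, one_smul, Algebra.commutes]
  | add x x' i _ _ hx hx' => rw [add_mul, hx, hx', mul_add, smul_add]
  | mem_mul w hw i x _ ih =>
    obtain ⟨v, rfl⟩ := hw
    rw [mul_assoc, ih, mul_smul_comm, ← mul_assoc, ι_mul_eq_neg_one_pow_smul hy, smul_mul_assoc,
      smul_smul, mul_assoc, ← pow_add, Nat.succ_mul, add_comm (i * m)]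

section Basis

open Set.powersetCard

variable [LinearOrder I] (b : Module.Basis I R M)

lemma basis_mem_exteriorPower (s : Finset I) : b.ExteriorAlgebra s ∈ ⋀[R]^s.card M := by
  rw [basis_apply_ofCard b rfl]
  exact ιMulti_range R s.card ⟨_, rfl⟩

lemma basis_repr_eq_zero_of_mem_exteriorPower {k : ℕ} {x : ExteriorAlgebra R M}
    (hx : x ∈ ⋀[R]^k M) {s : Finset I} (hs : s.card ≠ k) :
    b.ExteriorAlgebra.repr x s = 0 := by
  rw [Module.Basis.ExteriorAlgebra, Module.Basis.repr_reindex_apply]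
  exact DirectSum.IsInternal.collectedBasis_repr_of_mem_ne _ _ (Ne.symm hs) hx

lemma basis_mul_basis_of_disjoint {s t : Finset I} (h : Disjoint s t) :
    ∃ z : ℤˣ,
      b.ExteriorAlgebra s * b.ExteriorAlgebra t = ((z : ℤ) : R) • b.ExteriorAlgebra (s ∪ t) := by
  have key := basis_mul_of_disjoint b (ofCard (s := s) rfl) (ofCard (s := t) rfl) h
  rw [Units.smul_def, ← Int.cast_smul_eq_zsmul R] at key
  exact ⟨_, key.trans (by congr 2; exact Finset.disjUnion_eq_union s t h)⟩

lemma basis_mul_basis_of_not_disjoint {s t : Finset I} (h : ¬ Disjoint s t) :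
    b.ExteriorAlgebra s * b.ExteriorAlgebra t = 0 :=
  basis_mul_of_not_disjoint b (ofCard rfl) (ofCard rfl) h

variable [Fintype I]

noncomputable def complSign (s : Finset I) : R :=
  b.ExteriorAlgebra.repr (b.ExteriorAlgebra s * b.ExteriorAlgebra sᶜ) Finset.univ

lemma complSign_mul_self (s : Finset I) : complSign b s * complSign b s = 1 := by
  obtain ⟨z, hz⟩ := basis_mul_basis_of_disjoint b (disjoint_compl_right : Disjoint s sᶜ)
  rw [Finset.union_compl] at hz
  rcases Int.units_eq_one_or z with rfl | rfl <;> simp [complSign, hz]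

lemma complSign_compl (hn : Odd (Fintype.card I)) (s : Finset I) :
    complSign b sᶜ = complSign b s := by
  have hcard : Even (sᶜ.card * s.card) := by
    have := Finset.card_add_card_compl s
    rcases Nat.even_or_odd s.card with h | h
    · exact h.mul_left _
    · exact (Nat.odd_add.mp (this ▸ hn)).mp h |>.mul_right _
  rw [complSign, complSign, compl_compl, mul_eq_neg_one_pow_smul_mul
    (basis_mem_exteriorPower b sᶜ) (basis_mem_exteriorPower b s), hcard.neg_one_pow, one_smul]

lemma repr_univ_basis_mul_basis (s t : Finset I) :
    b.ExteriorAlgebra.repr (b.ExteriorAlgebra s * b.ExteriorAlgebra t) Finset.univ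
      = if t = sᶜ then complSign b s else 0 := by
  split_ifs with ht
  · rw [ht, complSign]
  by_cases hd : Disjoint s t
  · obtain ⟨z, hz⟩ := basis_mul_basis_of_disjoint b hd
    have hne : s ∪ t ≠ Finset.univ := fun hu =>
      ht (eq_compl_iff_isCompl.mpr (IsCompl.symm ⟨hd, codisjoint_iff.mpr hu⟩))
    simp [hz, hne]
  · simp [basis_mul_basis_of_not_disjoint b hd]

lemma repr_univ_basis_mul (s : Finset I) (y : ExteriorAlgebra R M) :
    b.ExteriorAlgebra.repr (b.ExteriorAlgebra s * y) Finset.univ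
      = complSign b s * b.ExteriorAlgebra.repr y sᶜ := by
  conv_lhs => rw [← b.ExteriorAlgebra.sum_repr y, Finset.mul_sum]
  simp only [mul_smul_comm, map_sum, map_smul, Finsupp.coe_finsetSum, Finset.sum_apply,
    Finsupp.smul_apply, smul_eq_mul, repr_univ_basis_mul_basis, mul_ite, mul_zero,
    Finset.sum_ite_eq', Finset.mem_univ, if_true]
  exact mul_comm _ _

structure IsHodgeStar (st : ExteriorAlgebra R M →ₗ[R] ExteriorAlgebra R M) : Prop where
  mem_exteriorPower (t : Finset I) :
    st (b.ExteriorAlgebra t) ∈ ⋀[R]^(Fintype.card I - t.card) M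
  basis_mul_apply_basis (s t : Finset I) : s.card = t.card →
    b.ExteriorAlgebra s * st (b.ExteriorAlgebra t)
      = (if s = t then (1 : R) else 0) • b.ExteriorAlgebra Finset.univ

namespace IsHodgeStar

variable {b} {st : ExteriorAlgebra R M →ₗ[R] ExteriorAlgebra R M}

lemma apply_basis (h : IsHodgeStar b st) (t : Finset I) :
    st (b.ExteriorAlgebra t) = complSign b t • b.ExteriorAlgebra tᶜ := by
  refine b.ExteriorAlgebra.ext_elem fun v => ?_
  rw [map_smul, Finsupp.smul_apply, Module.Basis.repr_self, Finsupp.single_apply, smul_eq_mul]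
  by_cases hv : vᶜ.card = t.card
  · have key :=
      congrArg (b.ExteriorAlgebra.repr · Finset.univ) (h.basis_mul_apply_basis vᶜ t hv)
    simp only [repr_univ_basis_mul, compl_compl, map_smul, Finsupp.smul_apply,
      Module.Basis.repr_self, Finsupp.single_eq_same, smul_eq_mul, mul_one] at key
    have hcoeff : b.ExteriorAlgebra.repr (st (b.ExteriorAlgebra t)) v
        = complSign b vᶜ * if vᶜ = t then 1 else 0 := by
      rw [← key, ← mul_assoc, complSign_mul_self, one_mul]
    rw [hcoeff]
    by_cases hvt : vᶜ = t
    · subst hvt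
      rw [compl_compl, if_pos rfl, if_pos rfl]
    · rw [if_neg hvt, if_neg fun htv => hvt (compl_eq_comm.mp htv), mul_zero, mul_zero]
  · have hvt : vᶜ ≠ t := fun hvt => hv (congrArg Finset.card hvt)
    have hdeg : v.card ≠ Fintype.card I - t.card := by
      have := Finset.card_add_card_compl v
      have := Finset.card_le_univ t
      omega
    rw [basis_repr_eq_zero_of_mem_exteriorPower b (h.mem_exteriorPower t) hdeg,
      if_neg fun htv => hvt (compl_eq_comm.mp htv), mul_zero]

lemma involutive (h : IsHodgeStar b st) (hn : Odd (Fintype.card I)) :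
    Function.Involutive st := by
  have : st ∘ₗ st = LinearMap.id := b.ExteriorAlgebra.ext fun t => by
    rw [LinearMap.comp_apply, h.apply_basis, map_smul, h.apply_basis, complSign_compl b hn,
      compl_compl, smul_smul, complSign_mul_self, one_smul, LinearMap.id_apply]
  exact LinearMap.congr_fun this

lemma repr_univ_basis_mul_apply_basis (h : IsHodgeStar b st) (s t : Finset I) :
    b.ExteriorAlgebra.repr (b.ExteriorAlgebra s * st (b.ExteriorAlgebra t)) Finset.univ
      = if s = t then 1 else 0 := by
  rw [h.apply_basis, mul_smul_comm, map_smul, Finsupp.smul_apply, repr_univ_basis_mul,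
    Module.Basis.repr_self, Finsupp.single_apply, smul_eq_mul]
  simp only [compl_inj_iff]
  by_cases hst : s = t
  · rw [if_pos hst.symm, if_pos hst, hst, mul_one, complSign_mul_self]
  · rw [if_neg (Ne.symm hst), if_neg hst, mul_zero, mul_zero]

lemma repr_univ_mul_apply_basis (h : IsHodgeStar b st) (x : ExteriorAlgebra R M)
    (t : Finset I) :
    b.ExteriorAlgebra.repr (x * st (b.ExteriorAlgebra t)) Finset.univ
      = b.ExteriorAlgebra.repr x t := by
  have : (b.ExteriorAlgebra.coord Finset.univ).comp
      (LinearMap.mulRight R (st (b.ExteriorAlgebra t))) = b.ExteriorAlgebra.coord t :=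
    b.ExteriorAlgebra.ext fun s => by
      simp [h.repr_univ_basis_mul_apply_basis, Finsupp.single_apply]
  exact LinearMap.congr_fun this x

lemma repr_univ_basis_mul_apply (h : IsHodgeStar b st) (s : Finset I)
    (y : ExteriorAlgebra R M) :
    b.ExteriorAlgebra.repr (b.ExteriorAlgebra s * st y) Finset.univ
      = b.ExteriorAlgebra.repr y s := by
  have : (b.ExteriorAlgebra.coord Finset.univ).comp
      ((LinearMap.mulLeft R (b.ExteriorAlgebra s)).comp st) = b.ExteriorAlgebra.coord s :=
    b.ExteriorAlgebra.ext fun t => by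
      simp [h.repr_univ_basis_mul_apply_basis, Finsupp.single_apply, eq_comm]
  exact LinearMap.congr_fun this y

lemma repr_apply_mul_apply_basis (h : IsHodgeStar b st) (hn : Odd (Fintype.card I))
    {ω : ExteriorAlgebra R M} {s : Finset I} (hω : Commute ω (b.ExteriorAlgebra s)) (t : Finset I) :
    b.ExteriorAlgebra.repr (st (ω * st (b.ExteriorAlgebra t))) s
      = b.ExteriorAlgebra.repr (ω * b.ExteriorAlgebra s) t := by
  rw [← h.repr_univ_basis_mul_apply, h.involutive hn, ← mul_assoc, ← hω.eq,
    h.repr_univ_mul_apply_basis]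

end IsHodgeStar

end Basis

end ExteriorAlgebra

section Sesquilinear

open ComplexConjugate

variable {ι E : Type*} [AddCommGroup E] [Module ℂ E] (e : Module.Basis ι ℂ E)

lemma conj_repr_of_mem_span_real [Module ℝ E] [IsScalarTower ℝ ℂ E] {x : E}
    (hx : x ∈ Submodule.span ℝ (Set.range e)) (i : ι) : conj (e.repr x i) = e.repr x i := by
  induction hx using Submodule.span_induction with
  | mem y hy =>
    obtain ⟨j, rfl⟩ := hy
    classical
    rw [Module.Basis.repr_self, Finsupp.single_apply]
    split_ifs <;> simp
  | zero => simp
  | add y z _ _ hy hz => simp only [map_add, Finsupp.add_apply, hy, hz]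
  | smul c y _ hy =>
    rw [← algebraMap_smul ℂ c y, map_smul, Finsupp.smul_apply, smul_eq_mul, map_mul, hy,
      Complex.coe_algebraMap, Complex.conj_ofReal]

variable [Fintype ι] [DecidableEq ι] {B : E →ₗ[ℂ] E →ₗ⋆[ℂ] ℂ}

lemma form_basis_apply (hB : ∀ i j, B (e i) (e j) = if i = j then 1 else 0) (i : ι) (y : E) :
    B (e i) y = conj (e.repr y i) := by
  conv_lhs => rw [← e.sum_repr y]
  simp only [map_sum, map_smulₛₗ, hB, smul_eq_mul, mul_ite, mul_one,
    mul_zero, Finset.sum_ite_eq, Finset.mem_univ, if_true]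

lemma form_apply_basis (hB : ∀ i j, B (e i) (e j) = if i = j then 1 else 0) (x : E) (j : ι) :
    B x (e j) = e.repr x j := by
  conv_lhs => rw [← e.sum_repr x]
  simp only [map_sum, map_smul, LinearMap.sum_apply, LinearMap.smul_apply, hB,
    smul_eq_mul, mul_ite, mul_one, mul_zero, Finset.sum_ite_eq', Finset.mem_univ, if_true]

lemma ext_of_form_basis_apply (hB : ∀ i j, B (e i) (e j) = if i = j then 1 else 0) {x y : E}
    (h : ∀ i, B (e i) x = B (e i) y) : x = y :=
  e.ext_elem fun i => (starRingEnd ℂ).injective (by simpa only [form_basis_apply e hB] using h i)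

end Sesquilinear

namespace ExteriorAlgebra

variable {M I : Type*} [AddCommGroup M] [Module ℂ M] [LinearOrder I] (b : Module.Basis I ℂ M)

lemma mul_basis_mem_span_real {x : ExteriorAlgebra ℂ M}
    (hx : x ∈ Submodule.span ℝ (Set.range b.ExteriorAlgebra)) (s : Finset I) :
    x * b.ExteriorAlgebra s ∈ Submodule.span ℝ (Set.range b.ExteriorAlgebra) := by
  induction hx using Submodule.span_induction with
  | mem y hy =>
    obtain ⟨u, rfl⟩ := hy
    by_cases hd : Disjoint u s
    · obtain ⟨z, hz⟩ := basis_mul_basis_of_disjoint b hd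
      rw [hz, Int.cast_smul_eq_zsmul]
      exact zsmul_mem (Submodule.subset_span (Set.mem_range_self _)) _
    · rw [basis_mul_basis_of_not_disjoint b hd]
      exact zero_mem _
  | zero => rw [zero_mul]; exact zero_mem _
  | add y z _ _ hy hz => rw [add_mul]; exact add_mem hy hz
  | smul c y _ hy => rw [smul_mul_assoc]; exact Submodule.smul_mem _ c hy

variable [Fintype I] {b} {st : ExteriorAlgebra ℂ M →ₗ[ℂ] ExteriorAlgebra ℂ M}

theorem IsHodgeStar.form_mul_eq_form_apply_mul_apply (h : IsHodgeStar b st)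
    (hn : Odd (Fintype.card I)) {B : ExteriorAlgebra ℂ M →ₗ[ℂ] ExteriorAlgebra ℂ M →ₗ⋆[ℂ] ℂ}
    (hB : ∀ s t, B (b.ExteriorAlgebra s) (b.ExteriorAlgebra t) = if s = t then 1 else 0)
    {k : ℕ} (hk : Even k) {ω : ExteriorAlgebra ℂ M} (hω : ω ∈ ⋀[ℂ]^k M)
    (hω_real : ω ∈ Submodule.span ℝ (Set.range b.ExteriorAlgebra))
    (x y : ExteriorAlgebra ℂ M) : B (ω * x) y = B x (st (ω * st y)) := by
  have hcomm (s : Finset I) : Commute ω (b.ExteriorAlgebra s) := by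
    rw [Commute, SemiconjBy, mul_eq_neg_one_pow_smul_mul hω (basis_mem_exteriorPower b s),
      (hk.mul_right _).neg_one_pow, one_smul]
  have : B ∘ₗ LinearMap.mulLeft ℂ ω = B.compl₂ (st ∘ₗ LinearMap.mulLeft ℂ ω ∘ₗ st) :=
    LinearMap.ext_basis b.ExteriorAlgebra b.ExteriorAlgebra fun s t => by
      simp only [LinearMap.comp_apply, LinearMap.compl₂_apply, LinearMap.mulLeft_apply,
        form_apply_basis _ hB, form_basis_apply _ hB,
        h.repr_apply_mul_apply_basis hn (hcomm s),
        conj_repr_of_mem_span_real _ (mul_basis_mem_span_real b hω_real s)]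
  exact LinearMap.congr_fun₂ this x y

end ExteriorAlgebra

lemma cMonomial_eq_basis {n : ℕ} {V : Type*} [AddCommGroup V] [Module ℂ V]
    (b : Module.Basis (Fin n) ℂ V) : cMonomial b = b.ExteriorAlgebra := by
  funext s
  rw [basis_apply_ofCard b rfl, ιMulti_family, ιMulti_apply, cMonomial]
  congr 1
  exact List.ext_getElem (by simp) (by simp [Set.powersetCard.ofFinEmbEquiv_symm_apply,
    Finset.orderEmbOfFin_apply])

/-- let `φ = ω ∧ ·` be left wedge multiplication by a fixed real form `ω` of
even degree `2d` on the complexified exterior algebra of an oriented odd-dimensional real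
inner product space, and let `ψ = φ^⋆` be its super-adjoint with respect to the induced
Hermitean inner product `inn`, i.e. `(φ α, β) = (-1)^(deg φ · deg α) (α, ψ β)` for
homogeneous `α`. Then `φ^⋆ = * ∘ φ ∘ *`, where `*` is the Hodge star `st`. -/
theorem stmt7 {n : ℕ} (hn : Odd n) {V : Type*} [AddCommGroup V] [Module ℂ V]
    (b : Module.Basis (Fin n) ℂ V)
    (inn : ExteriorAlgebra ℂ V → ExteriorAlgebra ℂ V → ℂ)
    (inn_addl : ∀ x y z, inn (x + y) z = inn x z + inn y z)
    (inn_addr : ∀ x y z, inn x (y + z) = inn x y + inn x z)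
    (inn_sml : ∀ (c : ℂ) (x y), inn (c • x) y = c * inn x y)
    (inn_smr : ∀ (c : ℂ) (x y), inn x (c • y) = (starRingEnd ℂ) c * inn x y)
    (inn_mon : ∀ s t, inn (cMonomial b s) (cMonomial b t) = if s = t then 1 else 0)
    (st : ExteriorAlgebra ℂ V →ₗ[ℂ] ExteriorAlgebra ℂ V)
    (st_deg : ∀ s : Finset (Fin n),
      st (cMonomial b s) ∈
        (LinearMap.range (ι ℂ : V →ₗ[ℂ] ExteriorAlgebra ℂ V)) ^ (n - s.card))
    (st_char : ∀ s t : Finset (Fin n), s.card = t.card →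
      cMonomial b s * st (cMonomial b t)
        = (if s = t then (1 : ℂ) else 0) • cMonomial b Finset.univ)
    (d : ℕ) (ω : ExteriorAlgebra ℂ V)
    (hω_even : ω ∈ (LinearMap.range (ι ℂ : V →ₗ[ℂ] ExteriorAlgebra ℂ V)) ^ (2 * d))
    (hω_real : ω ∈ Submodule.span ℝ (Set.range (cMonomial b)))
    (ψ : ExteriorAlgebra ℂ V →ₗ[ℂ] ExteriorAlgebra ℂ V)
    (hψ : ∀ (k : ℕ) (α : ExteriorAlgebra ℂ V),
      α ∈ (LinearMap.range (ι ℂ : V →ₗ[ℂ] ExteriorAlgebra ℂ V)) ^ k →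
      ∀ β, inn (ω * α) β = (-1 : ℂ) ^ (2 * d * k) * inn α (ψ β)) :
    ∀ β, ψ β = st (ω * st β) := by
  rw [cMonomial_eq_basis] at inn_mon st_deg st_char hω_real
  let B : ExteriorAlgebra ℂ V →ₗ[ℂ] ExteriorAlgebra ℂ V →ₗ⋆[ℂ] ℂ :=
    LinearMap.mk₂'ₛₗ (RingHom.id ℂ) (starRingEnd ℂ) inn inn_addl inn_sml inn_addr inn_smr
  have hst : IsHodgeStar b st := ⟨by simpa using st_deg, st_char⟩
  intro β
  refine ext_of_form_basis_apply b.ExteriorAlgebra (B := B) inn_mon fun s => ?_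
  have hψs := hψ s.card _ (basis_mem_exteriorPower b s) β
  rw [((even_two_mul d).mul_right _).neg_one_pow, one_mul] at hψs
  calc inn (b.ExteriorAlgebra s) (ψ β) = B (ω * b.ExteriorAlgebra s) β := hψs.symm
    _ = B (b.ExteriorAlgebra s) (st (ω * st β)) :=
      hst.form_mul_eq_form_apply_mul_apply (by simpa using hn) inn_mon (even_two_mul d) hω_even
        hω_real _ _
end

section
/- With the setup of a rank-three WSD point (T = W ⊗ ℝ³, dim W = 3), the wedge operators L_j with the structural 2-forms ω_D, -ω₂, ω₁ and the wedge operators V_j with the volume forms of the three distributions W_j = W⊗e_j all commute with the derivations J₁, J₂, J₃ generating so(3,ℝ) on Λ*(T⊗ℂ). -/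
open ExteriorAlgebra

/-! `J k` is an infinitesimal rotation of the plane of rows `k + 1, k + 2` of the basis `v (i, j)`,
fixing row `k`. Each of `ω₁, ω₂, ω_D` is a sum over the rows of products of two vectors of the same
row, so by the Leibniz rule the contributions of the two rotated rows cancel. Each `Vol j` is the
fixed vector of column `j` times the product of the two rotated ones, and that product is killed
because vectors square to zero. A derivation killing `ω` commutes with `ω * ·`. -/

section Leibniz

variable {R A : Type*} [Semiring R] [Ring A] [Module R A] (D : A →ₗ[R] A)
  (hD : ∀ a b : A, D (a * b) = D a * b + a * D b)
include hD

theorem leibniz_mul_eq_mul_of_map_eq_zero {ω : A} (hω : D ω = 0) (a : A) :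
    D (ω * a) = ω * D a := by
  rw [hD, hω, zero_mul, zero_add]

theorem leibniz_map_mul_eq_zero_of_rotation {x y : A} (hx : D x = y) (hy : D y = -x)
    (hxx : x * x = 0) (hyy : y * y = 0) : D (x * y) = 0 := by
  rw [hD, hx, hy, hyy, mul_neg, hxx, neg_zero, add_zero]

theorem leibniz_map_add_mul_eq_zero_of_rotation {x y z x' y' z' : A}
    (hx : D x = y) (hy : D y = -x) (hz : D z = 0)
    (hx' : D x' = y') (hy' : D y' = -x') (hz' : D z' = 0) :
    D (z * z' + x * x' + y * y') = 0 := by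
  simp only [map_add, hD, hx, hy, hz, hx', hy', hz', zero_mul, mul_zero, neg_mul, mul_neg]
  abel

end Leibniz

theorem Fin.sum_univ_three_addLeft {M : Type*} [AddCommMonoid M] (f : Fin 3 → M) (k : Fin 3) :
    ∑ i, f i = f k + f (k + 1) + f (k + 2) := by
  rw [← Equiv.sum_comp (Equiv.addLeft k), Fin.sum_univ_three]
  simp only [Equiv.coe_addLeft, add_zero]

theorem ExteriorAlgebra.ι_mul_ι_mul_ι_rotate {R M : Type*} [CommRing R] [AddCommGroup M]
    [Module R M] (a b c : M) : ι R a * ι R b * ι R c = ι R b * ι R c * ι R a := by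
  have hab : ι R a * ι R b = -(ι R b * ι R a) := eq_neg_of_add_eq_zero_left (ι_add_mul_swap a b)
  have hac : ι R a * ι R c = -(ι R c * ι R a) := eq_neg_of_add_eq_zero_left (ι_add_mul_swap a c)
  rw [hab, neg_mul, mul_assoc, hac, mul_neg, neg_neg, mul_assoc]

/-- at a rank-three WSD point (`T = W ⊗ ℝ³`, `dim W = 3`, complexified),
the wedge operators `L₀ = ω_D ∧ ·`, `L₁ = -ω₂ ∧ ·`, `L₂ = ω₁ ∧ ·` with the structural
2-forms and the wedge operators `V_j = Vol(W_j) ∧ ·` with the volume forms of the three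
distributions all commute with the derivations `J₁, J₂, J₃` generating `so(3,ℝ)` on
`Λ*(T⊗ℂ)`. -/
theorem stmt16 {T : Type*} [AddCommGroup T] [Module ℂ T]
    (v : Module.Basis (Fin 3 × Fin 3) ℂ T)
    (J : Fin 3 → Module.End ℂ (ExteriorAlgebra ℂ T))
    (hder : ∀ (k : Fin 3) (x y : ExteriorAlgebra ℂ T),
      J k (x * y) = J k x * y + x * J k y)
    (hJ0 : ∀ j : Fin 3, J 0 (ι ℂ (v (0, j))) = 0 ∧
      J 0 (ι ℂ (v (1, j))) = ι ℂ (v (2, j)) ∧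
      J 0 (ι ℂ (v (2, j))) = -ι ℂ (v (1, j)))
    (hJ1 : ∀ j : Fin 3, J 1 (ι ℂ (v (2, j))) = ι ℂ (v (0, j)) ∧
      J 1 (ι ℂ (v (0, j))) = -ι ℂ (v (2, j)) ∧
      J 1 (ι ℂ (v (1, j))) = 0)
    (hJ2 : ∀ j : Fin 3, J 2 (ι ℂ (v (0, j))) = ι ℂ (v (1, j)) ∧
      J 2 (ι ℂ (v (1, j))) = -ι ℂ (v (0, j)) ∧
      J 2 (ι ℂ (v (2, j))) = 0)
    (ω₁ ω₂ ωD : ExteriorAlgebra ℂ T)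
    (hω₁ : ω₁ = ∑ i : Fin 3, ι ℂ (v (i, 0)) * ι ℂ (v (i, 1)))
    (hω₂ : ω₂ = ∑ i : Fin 3, ι ℂ (v (i, 0)) * ι ℂ (v (i, 2)))
    (hωD : ωD = ∑ i : Fin 3, ι ℂ (v (i, 1)) * ι ℂ (v (i, 2)))
    (Vol : Fin 3 → ExteriorAlgebra ℂ T)
    (hVol : ∀ j, Vol j = ι ℂ (v (0, j)) * ι ℂ (v (1, j)) * ι ℂ (v (2, j))) :
    ∀ (k : Fin 3) (x : ExteriorAlgebra ℂ T),
      J k (ωD * x) = ωD * J k x ∧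
      J k (-ω₂ * x) = -ω₂ * J k x ∧
      J k (ω₁ * x) = ω₁ * J k x ∧
      ∀ j : Fin 3, J k (Vol j * x) = Vol j * J k x := by
  intro k x
  have hrot : ∀ j, J k (ι ℂ (v (k + 1, j))) = ι ℂ (v (k + 2, j)) ∧
      J k (ι ℂ (v (k + 2, j))) = -ι ℂ (v (k + 1, j)) ∧ J k (ι ℂ (v (k, j))) = 0 := by
    fin_cases k
    exacts [fun j => ⟨(hJ0 j).2.1, (hJ0 j).2.2, (hJ0 j).1⟩, hJ1, hJ2]
  have hpair : ∀ j j', J k (∑ i, ι ℂ (v (i, j)) * ι ℂ (v (i, j'))) = 0 := fun j j' => by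
    rw [Fin.sum_univ_three_addLeft _ k]
    exact leibniz_map_add_mul_eq_zero_of_rotation _ (hder k) (hrot j).1 (hrot j).2.1
      (hrot j).2.2 (hrot j').1 (hrot j').2.1 (hrot j').2.2
  have hVol_rot : ∀ j, Vol j = ι ℂ (v (k, j)) * (ι ℂ (v (k + 1, j)) * ι ℂ (v (k + 2, j))) := by
    intro j
    rw [hVol, ← mul_assoc]
    fin_cases k
    · rfl
    · exact ι_mul_ι_mul_ι_rotate _ _ _
    · exact (ι_mul_ι_mul_ι_rotate _ _ _).symm
  have hVol_inv : ∀ j, J k (Vol j) = 0 := fun j => by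
    rw [hVol_rot, leibniz_mul_eq_mul_of_map_eq_zero _ (hder k) (hrot j).2.2,
      leibniz_map_mul_eq_zero_of_rotation _ (hder k) (hrot j).1 (hrot j).2.1
        (ι_sq_zero _) (ι_sq_zero _), mul_zero]
  have hω₂_inv : J k (-ω₂) = 0 := by rw [map_neg, hω₂, hpair, neg_zero]
  exact ⟨leibniz_mul_eq_mul_of_map_eq_zero _ (hder k) (hωD ▸ hpair 1 2) x,
    leibniz_mul_eq_mul_of_map_eq_zero _ (hder k) hω₂_inv x,
    leibniz_mul_eq_mul_of_map_eq_zero _ (hder k) (hω₁ ▸ hpair 0 1) x,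
    fun j => leibniz_mul_eq_mul_of_map_eq_zero _ (hder k) (hVol_inv j) x⟩
end
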